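/- arXiv:2504.05185 — 3 statements merged into one kernel-verified Lean document; each statement's English description precedes it below -/
import Mathlib

section
/- Let T ≥ 1 be an integer, 0 ≤ λ < 1, ε ≥ 0, R ∈ ℝ, and δ : {0,…,T−1} → ℝ with |δ_k| ≤ ε for all k < T−1 and δ_{T−1} = R. Define Â_t = Σ_{l=0}^{T−t−1} λ^l δ_{t+l} and S = −(1/T) Σ_{t=0}^{T−1} Â_t. Then |S + (R/T) · Σ_{j=0}^{T−1} λ^j| ≤ ε·(T−1)/(T·(1−λ)); in particular the error term |S + (R/T)·(1−λ^T)/(1−λ)| is at most ε/(1−λ). -/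
/-- PPO loss under GAE, case `λ < 1`: the unweighted mean advantage
`S = -(1/T) ∑_t Â_t` satisfies
`|S + (R/T) ∑_{j<T} λ^j| ≤ ε (T-1) / (T (1-λ))`, and in particular
`|S + (R/T) (1-λ^T)/(1-λ)| ≤ ε/(1-λ)`. -/
theorem ppo_mean_advantage_lambda_lt_one (T : ℕ) (hT : 1 ≤ T) (lam ε R : ℝ)
    (hlam0 : 0 ≤ lam) (hlam1 : lam < 1) (hε : 0 ≤ ε) (δ : ℕ → ℝ)
    (hδ : ∀ k, k < T - 1 → |δ k| ≤ ε) (hR : δ (T - 1) = R)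
    (A : ℕ → ℝ) (hA : ∀ t, A t = ∑ l ∈ Finset.range (T - t), lam ^ l * δ (t + l))
    (S : ℝ) (hS : S = -(1 / (T : ℝ)) * ∑ t ∈ Finset.range T, A t) :
    |S + (R / T) * ∑ j ∈ Finset.range T, lam ^ j| ≤ ε * ((T : ℝ) - 1) / ((T : ℝ) * (1 - lam))
      ∧ |S + (R / T) * ((1 - lam ^ T) / (1 - lam))| ≤ ε / (1 - lam) := by
  have hTpos : (0 : ℝ) < T := by exact_mod_cast hT
  have h1l : (0 : ℝ) < 1 - lam := by linarith
  -- g k = ∑_{j ≤ k} λ^j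
  set g : ℕ → ℝ := fun k => ∑ j ∈ Finset.range (k + 1), lam ^ j with hg
  have hgnonneg : ∀ k, 0 ≤ g k := fun k =>
    Finset.sum_nonneg fun j _ => pow_nonneg hlam0 j
  have hgle : ∀ k, g k ≤ 1 / (1 - lam) := by
    intro k
    have heq := geom_sum_eq (ne_of_lt hlam1) (k + 1)
    have heq2 : (lam ^ (k + 1) - 1) / (lam - 1) = (1 - lam ^ (k + 1)) / (1 - lam) := by
      rw [div_eq_div_iff (by linarith) (by linarith)]; ring
    rw [hg]; simp only []; rw [heq, heq2]
    have hp : 0 ≤ lam ^ (k + 1) := pow_nonneg hlam0 _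
    gcongr
    linarith
  -- rewrite A_t as a sum over Ico t T
  have hA' : ∀ t, A t = ∑ k ∈ Finset.Ico t T, lam ^ (k - t) * δ k := by
    intro t
    rw [hA t, Finset.sum_Ico_eq_sum_range]
    apply Finset.sum_congr rfl
    intro l _
    have h : t + l - t = l := by omega
    rw [h]
  -- swap sums
  have hswap : (∑ t ∈ Finset.range T, A t)
      = ∑ k ∈ Finset.range T, δ k * g k := by
    calc ∑ t ∈ Finset.range T, A t
        = ∑ t ∈ Finset.Ico 0 T, ∑ k ∈ Finset.Ico t T, lam ^ (k - t) * δ k := by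
          rw [Nat.Ico_zero_eq_range]; exact Finset.sum_congr rfl fun t _ => hA' t
      _ = ∑ k ∈ Finset.Ico 0 T, ∑ t ∈ Finset.Ico 0 (k + 1), lam ^ (k - t) * δ k :=
          Finset.sum_Ico_Ico_comm 0 T _
      _ = ∑ k ∈ Finset.range T, δ k * g k := by
          rw [Nat.Ico_zero_eq_range]
          apply Finset.sum_congr rfl
          intro k _
          rw [Finset.mul_sum]
          rw [Nat.Ico_zero_eq_range, ← Finset.sum_range_reflect (fun t => lam ^ (k - t) * δ k) (k + 1)]
          apply Finset.sum_congr rfl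
          intro j hj
          simp only [Finset.mem_range] at hj
          have : k - (k + 1 - 1 - j) = j := by omega
          rw [this, mul_comm]
  -- split off the last term
  have hsplit : (∑ k ∈ Finset.range T, δ k * g k)
      = (∑ k ∈ Finset.range (T - 1), δ k * g k) + R * g (T - 1) := by
    have : T = (T - 1) + 1 := by omega
    rw [this, Finset.sum_range_succ, ← this, hR]
  have hgT : g (T - 1) = ∑ j ∈ Finset.range T, lam ^ j := by
    have h : T - 1 + 1 = T := by omega
    rw [hg]; simp only []; rw [h]
  -- main error identity
  have hkey : S + (R / T) * ∑ j ∈ Finset.range T, lam ^ j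
      = -(1 / (T : ℝ)) * ∑ k ∈ Finset.range (T - 1), δ k * g k := by
    rw [hS, hswap, hsplit, ← hgT]
    field_simp
    ring
  -- bound the error sum
  have hbound : |∑ k ∈ Finset.range (T - 1), δ k * g k|
      ≤ ((T : ℝ) - 1) * (ε / (1 - lam)) := by
    calc |∑ k ∈ Finset.range (T - 1), δ k * g k|
        ≤ ∑ k ∈ Finset.range (T - 1), |δ k * g k| := Finset.abs_sum_le_sum_abs _ _
      _ ≤ ∑ k ∈ Finset.range (T - 1), ε / (1 - lam) := by
          apply Finset.sum_le_sum
          intro k hk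
          simp only [Finset.mem_range] at hk
          rw [abs_mul, abs_of_nonneg (hgnonneg k)]
          have h1 := hδ k hk
          have h2 := hgle k
          calc |δ k| * g k ≤ ε * (1 / (1 - lam)) := by
                apply mul_le_mul h1 h2 (hgnonneg k) hε
            _ = ε / (1 - lam) := by ring
      _ = ((T : ℝ) - 1) * (ε / (1 - lam)) := by
          rw [Finset.sum_const, Finset.card_range, nsmul_eq_mul]
          congr 1
          have : ((T - 1 : ℕ) : ℝ) = (T : ℝ) - 1 := by
            have : (1 : ℕ) ≤ T := hT
            push_cast [this]; ring
          exact this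
  have hεT : ε * ((T : ℝ) - 1) / ((T : ℝ) * (1 - lam))
      = (1 / (T : ℝ)) * (((T : ℝ) - 1) * (ε / (1 - lam))) := by
    field_simp
  have main : |S + (R / T) * ∑ j ∈ Finset.range T, lam ^ j|
      ≤ ε * ((T : ℝ) - 1) / ((T : ℝ) * (1 - lam)) := by
    rw [hkey, abs_mul, abs_neg, abs_of_pos (by positivity : (0:ℝ) < 1 / (T:ℝ)), hεT]
    exact mul_le_mul_of_nonneg_left hbound (by positivity)
  refine ⟨main, ?_⟩
  have hgeom : (∑ j ∈ Finset.range T, lam ^ j) = (1 - lam ^ T) / (1 - lam) := by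
    rw [geom_sum_eq (ne_of_lt hlam1)]
    rw [div_eq_div_iff (by linarith) (by linarith)]
    ring
  rw [← hgeom]
  refine main.trans ?_
  rw [div_le_div_iff₀ (by positivity) h1l]
  have hT1 : (1 : ℝ) ≤ (T : ℝ) := by exact_mod_cast hT
  nlinarith
end

section
/- Let T ≥ 1 be an integer, ε ≥ 0, R ∈ ℝ, and δ : {0,…,T−1} → ℝ with |δ_k| ≤ ε for all k < T−1 and δ_{T−1} = R. Define Â_t = Σ_{l=0}^{T−t−1} δ_{t+l} (i.e., GAE with λ = 1) and S = −(1/T) Σ_{t=0}^{T−1} Â_t. Then |S + R| ≤ ε·(T−1)/2. -/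
/-!
With `λ = 1` the advantages are tail sums of the TD errors, so `δ_k` occurs in the `k + 1`
advantages `Â_0, …, Â_k` and `∑_t Â_t = ∑_k (k + 1) δ_k`. The terminal error contributes
`T R` to this sum, i.e. exactly `-R` to `S`; the remaining weights `1, …, T - 1` have total
`T (T - 1) / 2`, which after division by `T` gives the bound.
-/

open Finset

theorem sum_range_sum_range_sub_add {M : Type*} [AddCommMonoid M] (f : ℕ → M) (n : ℕ) :
    ∑ t ∈ range n, ∑ l ∈ range (n - t), f (t + l) = ∑ k ∈ range n, (k + 1) • f k := by
  induction n with
  | zero => simp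
  | succ n ih =>
    have tail_succ : ∀ t ∈ range (n + 1),
        ∑ l ∈ range (n + 1 - t), f (t + l) = ∑ l ∈ range (n - t), f (t + l) + f n := by
      intro t ht
      have ht : t ≤ n := Nat.lt_succ_iff.mp (mem_range.mp ht)
      rw [Nat.sub_add_comm ht, sum_range_succ, Nat.add_sub_cancel' ht]
    rw [sum_congr rfl tail_succ, sum_add_distrib, sum_range_succ, Nat.sub_self, sum_range_zero,
      ih, sum_const, card_range, sum_range_succ, succ_nsmul]
    abel

theorem sum_range_natCast_add_one (n : ℕ) :
    ∑ k ∈ range n, ((k : ℝ) + 1) = n * (n + 1) / 2 := by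
  induction n with
  | zero => simp
  | succ n ih =>
    rw [sum_range_succ, ih]
    push_cast
    ring

theorem abs_sum_range_natCast_add_one_mul_le (x : ℕ → ℝ) (n : ℕ) (ε : ℝ)
    (hx : ∀ k < n, |x k| ≤ ε) :
    |∑ k ∈ range n, ((k : ℝ) + 1) * x k| ≤ ε * (n * (n + 1) / 2) := by
  calc |∑ k ∈ range n, ((k : ℝ) + 1) * x k|
      ≤ ∑ k ∈ range n, |((k : ℝ) + 1) * x k| := abs_sum_le_sum_abs _ _
    _ ≤ ∑ k ∈ range n, ((k : ℝ) + 1) * ε := by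
        refine sum_le_sum fun k hk => ?_
        rw [abs_mul, abs_of_nonneg (by positivity)]
        exact mul_le_mul_of_nonneg_left (hx k (mem_range.mp hk)) (by positivity)
    _ = ε * (n * (n + 1) / 2) := by rw [← sum_mul, sum_range_natCast_add_one, mul_comm]

theorem ppo_mean_advantage_lambda_eq_one_general (T : ℕ) (hT : 1 ≤ T) (ε R : ℝ)
    (δ : ℕ → ℝ)
    (hδ : ∀ k, k < T - 1 → |δ k| ≤ ε) (hR : δ (T - 1) = R)
    (A : ℕ → ℝ) (hA : ∀ t, A t = ∑ l ∈ Finset.range (T - t), δ (t + l))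
    (S : ℝ) (hS : S = -(1 / (T : ℝ)) * ∑ t ∈ Finset.range T, A t) :
    |S + R| ≤ ε * ((T : ℝ) - 1) / 2 := by
  obtain ⟨n, rfl⟩ : ∃ n, T = n + 1 := ⟨T - 1, by omega⟩
  simp only [Nat.add_sub_cancel] at hδ hR
  have sum_A : ∑ t ∈ range (n + 1), A t
      = ∑ k ∈ range n, ((k : ℝ) + 1) * δ k + (n + 1) * R := by
    rw [sum_congr rfl fun t _ => hA t, sum_range_sum_range_sub_add, sum_range_succ, hR]
    simp only [nsmul_eq_mul, Nat.cast_add, Nat.cast_one]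
  have terminal_cancels : S + R = -(1 / ((n : ℝ) + 1)) * ∑ k ∈ range n, ((k : ℝ) + 1) * δ k := by
    rw [hS, sum_A]
    push_cast
    field_simp
    ring
  calc |S + R| = 1 / ((n : ℝ) + 1) * |∑ k ∈ range n, ((k : ℝ) + 1) * δ k| := by
        rw [terminal_cancels, abs_mul, abs_neg, abs_of_pos (by positivity)]
    _ ≤ 1 / ((n : ℝ) + 1) * (ε * (n * (n + 1) / 2)) :=
        mul_le_mul_of_nonneg_left (abs_sum_range_natCast_add_one_mul_le δ n ε hδ) (by positivity)
    _ = ε * (((n + 1 : ℕ) : ℝ) - 1) / 2 := by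
        push_cast
        field_simp
        ring

/-- PPO loss under GAE, case `λ = 1`: the unweighted mean advantage
`S = -(1/T) ∑_t Â_t` with `Â_t = ∑_{l=0}^{T-t-1} δ_{t+l}` satisfies
`|S + R| ≤ ε (T-1) / 2`. -/
theorem ppo_mean_advantage_lambda_eq_one (T : ℕ) (hT : 1 ≤ T) (ε R : ℝ)
    (hε : 0 ≤ ε) (δ : ℕ → ℝ)
    (hδ : ∀ k, k < T - 1 → |δ k| ≤ ε) (hR : δ (T - 1) = R)
    (A : ℕ → ℝ) (hA : ∀ t, A t = ∑ l ∈ Finset.range (T - t), δ (t + l))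
    (S : ℝ) (hS : S = -(1 / (T : ℝ)) * ∑ t ∈ Finset.range T, A t) :
    |S + R| ≤ ε * ((T : ℝ) - 1) / 2 :=
  ppo_mean_advantage_lambda_eq_one_general T hT ε R δ hδ hR A hA S hS
end

section
/- Let T ≥ 1 be an integer, 0 < λ < 1, ε ≥ 0, R ∈ ℝ, and δ : {0,…,T−1} → ℝ with |δ_k| ≤ ε for all k < T−1 and δ_{T−1} = R. Define Â_t = Σ_{l=0}^{T−t−1} λ^l δ_{t+l} and Φ_{λ,T} = (1 − λ^{T−1}) / ((1 − λ)·λ^{T−1}). If |R| > ε · Φ_{λ,T}, then for every t ∈ {0,…,T−1}, Â_t has the same sign as R. -/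
/-!
Write `m = T - 1 - t`. Then `Â_t = H + λ^m R`, where the head `H` collects the pre-terminal
errors and satisfies `|H| ≤ ε (1 + λ + ⋯ + λ^(m-1))`. The normalised geometric sum
`(1 + λ + ⋯ + λ^(n-1)) / λ^n = λ⁻¹ + ⋯ + λ⁻ⁿ` increases with `n` and equals `Φ_{λ,T}` at
`n = T - 1`, so `|H| ≤ λ^m ε Φ_{λ,T} < λ^m |R|`: the terminal term dominates and fixes the sign.
-/

open Finset

theorem one_sub_pow_div_eq_geom_sum_div_pow {K : Type*} [Field K] {x : K} (hx : x ≠ 1) (n : ℕ) :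
    (1 - x ^ n) / ((1 - x) * x ^ n) = (∑ i ∈ range n, x ^ i) / x ^ n := by
  rw [geom_sum_eq hx, div_div, ← neg_sub x 1, ← neg_sub (x ^ n) 1, neg_mul, neg_div_neg_eq]

section OrderedField

variable {K : Type*} [Field K] [LinearOrder K] [IsStrictOrderedRing K]

theorem geom_sum_div_pow_monotone {x : K} (hx : 0 < x) :
    Monotone fun n : ℕ => (∑ i ∈ range n, x ^ i) / x ^ n := by
  refine monotone_nat_of_le_succ fun n => ?_
  rw [geom_sum_succ, pow_succ, add_div, mul_comm (x ^ n) x, mul_div_mul_left _ _ hx.ne']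
  exact le_add_of_nonneg_right (by positivity)

theorem abs_sum_pow_mul_le {x ε : K} (hx : 0 ≤ x) {a : ℕ → K} {n : ℕ}
    (ha : ∀ i < n, |a i| ≤ ε) :
    |∑ i ∈ range n, x ^ i * a i| ≤ ε * ∑ i ∈ range n, x ^ i := by
  rw [mul_sum]
  refine (abs_sum_le_sum_abs _ _).trans (sum_le_sum fun i hi => ?_)
  rw [abs_mul, abs_of_nonneg (pow_nonneg hx i), mul_comm ε]
  exact mul_le_mul_of_nonneg_left (ha i (mem_range.mp hi)) (pow_nonneg hx i)

theorem sign_add_mul_of_abs_lt {h c r : K} (hh : |h| < c * |r|) :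
    (0 < r → 0 < h + c * r) ∧ (r < 0 → h + c * r < 0) := by
  obtain ⟨hlo, hhi⟩ := abs_lt.mp hh
  refine ⟨fun hr => ?_, fun hr => ?_⟩
  · rw [abs_of_pos hr] at hlo
    linarith
  · rw [abs_of_neg hr, mul_neg] at hhi
    linarith

end OrderedField

theorem gae_uniform_fixed_sign_general (T : ℕ) (lam ε R : ℝ)
    (hlam0 : 0 < lam) (hlam1 : lam < 1) (hε : 0 ≤ ε) (δ : ℕ → ℝ)
    (hδ : ∀ k, k < T - 1 → |δ k| ≤ ε) (hR : δ (T - 1) = R)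
    (Φ : ℝ) (hΦ : Φ = (1 - lam ^ (T - 1)) / ((1 - lam) * lam ^ (T - 1)))
    (hdom : |R| > ε * Φ) :
    ∀ t, t < T →
      (0 < R → 0 < ∑ l ∈ Finset.range (T - t), lam ^ l * δ (t + l))
        ∧ (R < 0 → ∑ l ∈ Finset.range (T - t), lam ^ l * δ (t + l) < 0) := by
  intro t ht
  obtain ⟨m, rfl⟩ : ∃ m, T = t + m + 1 := ⟨T - t - 1, by omega⟩
  rw [show t + m + 1 - 1 = t + m by omega] at hR hδ hΦ
  rw [show t + m + 1 - t = m + 1 by omega, sum_range_succ, hR]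
  have hhead := abs_sum_pow_mul_le hlam0.le (a := fun l => δ (t + l)) (n := m)
    fun l hl => hδ (t + l) (by omega)
  have hnorm : (∑ i ∈ range m, lam ^ i) / lam ^ m ≤ Φ := by
    rw [hΦ, one_sub_pow_div_eq_geom_sum_div_pow hlam1.ne]
    exact geom_sum_div_pow_monotone hlam0 (by omega)
  have hdominated : ε * ∑ i ∈ range m, lam ^ i < lam ^ m * |R| :=
    calc ε * ∑ i ∈ range m, lam ^ i
        = lam ^ m * (ε * ((∑ i ∈ range m, lam ^ i) / lam ^ m)) := by field_simp
      _ ≤ lam ^ m * (ε * Φ) := by gcongr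
      _ < lam ^ m * |R| := by gcongr
  exact sign_add_mul_of_abs_lt (hhead.trans_lt hdominated)

/-- Uniform fixed-sign condition: if `|R| > ε Φ_{λ,T}` with
`Φ_{λ,T} = (1-λ^{T-1}) / ((1-λ) λ^{T-1})`, then for every token position
`t < T` the GAE advantage `Â_t` has the same sign as `R`. -/
theorem gae_uniform_fixed_sign (T : ℕ) (hT : 1 ≤ T) (lam ε R : ℝ)
    (hlam0 : 0 < lam) (hlam1 : lam < 1) (hε : 0 ≤ ε) (δ : ℕ → ℝ)
    (hδ : ∀ k, k < T - 1 → |δ k| ≤ ε) (hR : δ (T - 1) = R)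
    (Φ : ℝ) (hΦ : Φ = (1 - lam ^ (T - 1)) / ((1 - lam) * lam ^ (T - 1)))
    (hdom : |R| > ε * Φ) :
    ∀ t, t < T →
      (0 < R → 0 < ∑ l ∈ Finset.range (T - t), lam ^ l * δ (t + l))
        ∧ (R < 0 → ∑ l ∈ Finset.range (T - t), lam ^ l * δ (t + l) < 0) :=
  gae_uniform_fixed_sign_general T lam ε R hlam0 hlam1 hε δ hδ hR Φ hΦ hdom
end
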